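/- Let n ≥ 3 and let r_1, r_2, r_3 ∈ [n] be pairwise distinct. Then there exists a concurrently odd permutation π ∈ SC^{(r_1)} together with τ_1 ∈ AC^{(r_3)}, τ_2, τ_4 ∈ AC^{(r_2)}, and τ_3 ∈ AC^{(r_1)} such that π = τ_1 ∘ τ_2 ∘ τ_3 ∘ τ_4. -/

import Mathlib

open Equiv

/-- `x` with its `i`-th bit flipped. -/
def flipBit {n : ℕ} (i : Fin n) (x : Fin n → Bool) : Fin n → Bool :=
  Function.update x i (!x i)

/-- `SC i`: the set of `i`-concurrent controlled permutations (`i`-CCRBFs) of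
the hypercube `{0,1}^n`: the `i`-th bit of every point is preserved, and the
action on all other bits does not depend on the `i`-th bit. -/
def SC {n : ℕ} (i : Fin n) : Set (Perm (Fin n → Bool)) :=
  {σ | (∀ x, σ x i = x i) ∧ ∀ x, ∀ k, k ≠ i → σ x k = σ (flipBit i x) k}

/-- `AC i`: the set of concurrently even `i`-CCRBFs: those `σ ∈ SC i` whose
induced permutation of the face `{x | x i = false}` is even. -/
def AC {n : ℕ} (i : Fin n) : Set (Perm (Fin n → Bool)) :=
  {σ | σ ∈ SC i ∧ ∃ h : ∀ x : Fin n → Bool, x i = false ↔ σ x i = false,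
    Perm.sign (σ.subtypePerm (p := fun y => y i = false) (fun x => (h x).symm)) = 1}

/-!
In `{0,1}^3` an explicit identity, checked by computation, writes a `0`-controlled
transposition (concurrently odd) as a product of four controlled 3-cycles (concurrently
even) with controls `2, 1, 0, 1`. For general `n`, embed `{0,1}^3` into `{0,1}^n` on the
coordinates `r₁, r₂, r₃`, all other bits being zero, and let a permutation of `{0,1}^3` act
on this one copy, fixing every other point (acting on all `2^(n-3)` copies would make
every face permutation even). This lifting is multiplicative, keeps controlled
permutations controlled, and the induced permutation of a face is the lift of the induced
permutation of the corresponding face, so its sign is unchanged.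
-/

open Function

theorem Equiv.Perm.subtypePerm_viaFintypeEmbedding {α β : Type*} [Fintype α] [DecidableEq β]
    {p : α → Prop} {q : β → Prop} [DecidablePred p] (f : Perm α) (ι : α ↪ β)
    (hpq : ∀ a, q (ι a) ↔ p a) (hf : ∀ a, p (f a) ↔ p a)
    (hg : ∀ b, q (f.viaFintypeEmbedding ι b) ↔ q b) :
    (f.viaFintypeEmbedding ι).subtypePerm hg =
      (f.subtypePerm hf).viaFintypeEmbedding (ι.subtypeMap fun a ha => (hpq a).2 ha) := by
  ext ⟨b, hb⟩
  by_cases hbι : b ∈ Set.range ι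
  · obtain ⟨a, rfl⟩ := hbι
    have ha : p a := (hpq a).1 hb
    have hmap : (⟨ι a, hb⟩ : {b // q b}) = ι.subtypeMap (fun a ha => (hpq a).2 ha) ⟨a, ha⟩ :=
      rfl
    rw [hmap, Perm.viaFintypeEmbedding_apply_image]
    exact Perm.viaFintypeEmbedding_apply_image f ι a
  · have hmap : (⟨b, hb⟩ : {b // q b}) ∉ Set.range (ι.subtypeMap fun a ha => (hpq a).2 ha) :=
      fun ⟨a, ha⟩ => hbι ⟨a, congrArg Subtype.val ha⟩
    rw [Perm.viaFintypeEmbedding_apply_notMem_range _ _ hmap]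
    simp [Perm.viaFintypeEmbedding_apply_notMem_range _ _ hbι]

section Flip

variable {n : ℕ} {i k : Fin n}

@[simp]
lemma flipBit_apply_self (x : Fin n → Bool) : flipBit i x i = !x i := update_self _ _ _

lemma flipBit_apply_of_ne (h : k ≠ i) (x : Fin n → Bool) : flipBit i x k = x k :=
  update_of_ne h _ _

@[simp]
lemma flipBit_flipBit (x : Fin n → Bool) : flipBit i (flipBit i x) = x := by
  simp [flipBit]

lemma mem_SC_iff {σ : Perm (Fin n → Bool)} :
    σ ∈ SC i ↔ (∀ x, σ x i = x i) ∧ ∀ x, σ (flipBit i x) = flipBit i (σ x) := by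
  refine and_congr_right fun hfix => ⟨fun hctrl x => funext fun k => ?_, fun hcomm x k hk => ?_⟩
  · by_cases hk : k = i
    · subst hk
      simp [hfix]
    · rw [← hctrl x k hk, flipBit_apply_of_ne hk]
  · rw [hcomm, flipBit_apply_of_ne hk]

end Flip

section Lift

variable {m n : ℕ} (e : Fin m ↪ Fin n)

noncomputable def cubeEmbedding : (Fin m → Bool) ↪ (Fin n → Bool) where
  toFun v := extend e v fun _ => false
  inj' v w h := funext fun a => by
    simpa [e.injective.extend_apply] using congrFun h (e a)

lemma cubeEmbedding_apply_self (v : Fin m → Bool) (a : Fin m) :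
    cubeEmbedding e v (e a) = v a :=
  e.injective.extend_apply v (fun _ => false) a

lemma cubeEmbedding_apply_of_notMem_range {v : Fin m → Bool} {k : Fin n}
    (hk : k ∉ Set.range e) : cubeEmbedding e v k = false :=
  extend_apply' v (fun _ => false) k hk

lemma flipBit_cubeEmbedding (a : Fin m) (v : Fin m → Bool) :
    flipBit (e a) (cubeEmbedding e v) = cubeEmbedding e (flipBit a v) := by
  funext k
  by_cases hk : k ∈ Set.range e
  · obtain ⟨b, rfl⟩ := hk
    by_cases hb : b = a
    · subst hb
      simp [cubeEmbedding_apply_self]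
    · rw [flipBit_apply_of_ne (e.injective.ne hb), cubeEmbedding_apply_self,
        cubeEmbedding_apply_self, flipBit_apply_of_ne hb]
  · have hka : k ≠ e a := fun h => hk ⟨a, h.symm⟩
    rw [flipBit_apply_of_ne hka, cubeEmbedding_apply_of_notMem_range e hk,
      cubeEmbedding_apply_of_notMem_range e hk]

lemma flipBit_mem_range_cubeEmbedding {a : Fin m} {x : Fin n → Bool} :
    flipBit (e a) x ∈ Set.range (cubeEmbedding e) ↔ x ∈ Set.range (cubeEmbedding e) := by
  constructor
  · rintro ⟨v, hv⟩
    exact ⟨flipBit a v, by rw [← flipBit_cubeEmbedding, hv, flipBit_flipBit]⟩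
  · rintro ⟨v, rfl⟩
    exact ⟨flipBit a v, (flipBit_cubeEmbedding e a v).symm⟩

noncomputable def cubeLift : Perm (Fin m → Bool) →* Perm (Fin n → Bool) :=
  Perm.extendDomainHom (cubeEmbedding e).toEquivRange

lemma cubeLift_eq_viaFintypeEmbedding (f : Perm (Fin m → Bool)) :
    cubeLift e f = f.viaFintypeEmbedding (cubeEmbedding e) :=
  rfl

lemma cubeLift_apply_cubeEmbedding (f : Perm (Fin m → Bool)) (v : Fin m → Bool) :
    cubeLift e f (cubeEmbedding e v) = cubeEmbedding e (f v) :=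
  Perm.viaFintypeEmbedding_apply_image _ _ _

lemma cubeLift_apply_of_notMem (f : Perm (Fin m → Bool)) {x : Fin n → Bool}
    (hx : x ∉ Set.range (cubeEmbedding e)) : cubeLift e f x = x :=
  Perm.viaFintypeEmbedding_apply_notMem_range _ _ hx

lemma cubeLift_mem_SC {a : Fin m} {f : Perm (Fin m → Bool)} (hf : f ∈ SC a) :
    cubeLift e f ∈ SC (e a) := by
  rw [mem_SC_iff] at hf ⊢
  obtain ⟨hfix, hcomm⟩ := hf
  refine ⟨fun x => ?_, fun x => ?_⟩
  · by_cases hx : x ∈ Set.range (cubeEmbedding e)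
    · obtain ⟨v, rfl⟩ := hx
      rw [cubeLift_apply_cubeEmbedding, cubeEmbedding_apply_self, cubeEmbedding_apply_self,
        hfix]
    · rw [cubeLift_apply_of_notMem e f hx]
  · by_cases hx : x ∈ Set.range (cubeEmbedding e)
    · obtain ⟨v, rfl⟩ := hx
      rw [flipBit_cubeEmbedding, cubeLift_apply_cubeEmbedding, cubeLift_apply_cubeEmbedding,
        hcomm, flipBit_cubeEmbedding]
    · rw [cubeLift_apply_of_notMem e f hx, cubeLift_apply_of_notMem e f
        (flipBit_mem_range_cubeEmbedding e |>.not.mpr hx)]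

lemma cubeLift_exists_sign_face {a : Fin m} {f : Perm (Fin m → Bool)} {s : ℤˣ}
    (hf : ∃ h : ∀ v : Fin m → Bool, v a = false ↔ f v a = false,
      Perm.sign (f.subtypePerm (p := fun w => w a = false) fun v => (h v).symm) = s) :
    ∃ h : ∀ x : Fin n → Bool, x (e a) = false ↔ cubeLift e f x (e a) = false,
      Perm.sign ((cubeLift e f).subtypePerm (p := fun y => y (e a) = false)
        fun x => (h x).symm) = s := by
  obtain ⟨hface, hsign⟩ := hf
  have hLface : ∀ x : Fin n → Bool, x (e a) = false ↔ cubeLift e f x (e a) = false := by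
    intro x
    by_cases hx : x ∈ Set.range (cubeEmbedding e)
    · obtain ⟨v, rfl⟩ := hx
      rw [cubeLift_apply_cubeEmbedding, cubeEmbedding_apply_self, cubeEmbedding_apply_self,
        hface]
    · rw [cubeLift_apply_of_notMem e f hx]
  refine ⟨hLface, ?_⟩
  simp_rw [cubeLift_eq_viaFintypeEmbedding]
  rw [Perm.subtypePerm_viaFintypeEmbedding f _ (fun v => by rw [cubeEmbedding_apply_self])
    fun v => (hface v).symm, Perm.viaFintypeEmbedding_sign, hsign]

lemma cubeLift_mem_AC {a : Fin m} {f : Perm (Fin m → Bool)} (hf : f ∈ AC a) :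
    cubeLift e f ∈ AC (e a) :=
  ⟨cubeLift_mem_SC e hf.1, cubeLift_exists_sign_face e hf.2⟩

end Lift

def ctrlSwap {n : ℕ} (i : Fin n) (u v : Fin n → Bool) : Perm (Fin n → Bool) :=
  swap u v * swap (flipBit i u) (flipBit i v)

theorem odd_from_four_even_three :
    ∃ π ∈ SC (0 : Fin 3),
      (∃ h : ∀ x : Fin 3 → Bool, x 0 = false ↔ π x 0 = false,
        Perm.sign (π.subtypePerm (p := fun y => y 0 = false) (fun x => (h x).symm)) = -1) ∧
      ∃ τ1 ∈ AC (2 : Fin 3), ∃ τ2 ∈ AC (1 : Fin 3), ∃ τ3 ∈ AC (0 : Fin 3),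
        ∃ τ4 ∈ AC (1 : Fin 3), π = τ1 * τ2 * τ3 * τ4 :=
  ⟨ctrlSwap 0 ![false, false, true] ![false, true, true], ⟨by decide, by decide⟩, by decide,
    ctrlSwap 2 ![false, true, false] ![true, false, false] *
      ctrlSwap 2 ![true, false, false] ![true, true, false], ⟨⟨by decide, by decide⟩, by decide⟩,
    ctrlSwap 1 ![false, false, true] ![true, false, true] *
      ctrlSwap 1 ![true, false, false] ![false, false, true], ⟨⟨by decide, by decide⟩, by decide⟩,
    ctrlSwap 0 ![false, false, true] ![false, true, false] *
      ctrlSwap 0 ![false, true, false] ![false, true, true], ⟨⟨by decide, by decide⟩, by decide⟩,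
    ctrlSwap 1 ![true, false, false] ![false, false, true] *
      ctrlSwap 1 ![false, false, true] ![true, false, true], ⟨⟨by decide, by decide⟩, by decide⟩,
    Equiv.ext (by decide +kernel)⟩

theorem odd_from_four_even_general (n : ℕ) (r1 r2 r3 : Fin n)
    (h12 : r1 ≠ r2) (h13 : r1 ≠ r3) (h23 : r2 ≠ r3) :
    ∃ π ∈ SC r1,
      (∃ h : ∀ x : Fin n → Bool, x r1 = false ↔ π x r1 = false,
        Perm.sign (π.subtypePerm (p := fun y => y r1 = false) (fun x => (h x).symm)) = -1) ∧
      ∃ τ1 ∈ AC r3, ∃ τ2 ∈ AC r2, ∃ τ3 ∈ AC r1, ∃ τ4 ∈ AC r2,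
        π = τ1 * τ2 * τ3 * τ4 := by
  let e : Fin 3 ↪ Fin n := ⟨![r1, r2, r3], by
    intro a b hab
    fin_cases a <;> fin_cases b <;> simp_all [eq_comm]⟩
  obtain ⟨π, hπ, hodd, τ1, h1, τ2, h2, τ3, h3, τ4, h4, rfl⟩ := odd_from_four_even_three
  exact ⟨cubeLift e (τ1 * τ2 * τ3 * τ4), cubeLift_mem_SC e hπ,
    cubeLift_exists_sign_face e hodd,
    cubeLift e τ1, cubeLift_mem_AC e h1, cubeLift e τ2, cubeLift_mem_AC e h2,
    cubeLift e τ3, cubeLift_mem_AC e h3, cubeLift e τ4, cubeLift_mem_AC e h4,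
    by simp only [map_mul]⟩

/-- A concurrently odd concurrent controlled permutation exists that is a
product of four concurrently even blocks in dimensions `r₃, r₂, r₁, r₂`. -/
theorem odd_from_four_even (n : ℕ) (hn : 3 ≤ n) (r1 r2 r3 : Fin n)
    (h12 : r1 ≠ r2) (h13 : r1 ≠ r3) (h23 : r2 ≠ r3) :
    ∃ π ∈ SC r1,
      (∃ h : ∀ x : Fin n → Bool, x r1 = false ↔ π x r1 = false,
        Perm.sign (π.subtypePerm (p := fun y => y r1 = false) (fun x => (h x).symm)) = -1) ∧
      ∃ τ1 ∈ AC r3, ∃ τ2 ∈ AC r2, ∃ τ3 ∈ AC r1, ∃ τ4 ∈ AC r2,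
        π = τ1 * τ2 * τ3 * τ4 :=
  odd_from_four_even_general n r1 r2 r3 h12 h13 h23
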